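/- arXiv:1507.01316 — 2 statements merged into one kernel-verified Lean document; each statement's English description precedes it below -/
import Mathlib

section
/- Fix reals θ > 0, η > 0, V > 0, ξ > 0, Q > 0 and E_b ≥ 0, define F(R) = V·ξ·max(η(e^{θR} − 1) − E_b, 0) − Q·R, R_th = (1/θ)·ln(E_b/η + 1) and R_s = (1/θ)·ln(Q/(θ·V·η·ξ)). If R_th < R_s ≤ Q, then R_s minimizes F over [R_th, Q] and F(R_s) < −Q·R_th; in particular R_s is the unique minimizer of F over [0, Q]. -/
/-!
On `[R_th, ∞)` the hinge is active and `F` is a strictly convex exponential minus a linear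
term whose slope is exactly the derivative at `R_s`, so the tangent-line inequality for `exp`
makes `R_s` the strict minimizer there. On `[0, R_th]` the hinge is idle, `F(R) = -Q·R`
decreases down to `F(R_th)`, which already exceeds `F(R_s)`.
-/

open Real

lemma Real.exp_mul_one_div_mul_log {θ y : ℝ} (hθ : θ ≠ 0) (hy : 0 < y) :
    exp (θ * (1 / θ * log y)) = y := by
  rw [← mul_assoc, mul_one_div_cancel hθ, one_mul, exp_log hy]

lemma Real.exp_add_mul_sub_lt_exp {θ s x : ℝ} (hθ : θ ≠ 0) (hx : x ≠ s) :
    exp (θ * s) + θ * exp (θ * s) * (x - s) < exp (θ * x) := by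
  have hsplit : exp (θ * x) = exp (θ * s) * exp (θ * (x - s)) := by
    rw [← exp_add]; ring_nf
  have htangent := add_one_lt_exp (mul_ne_zero hθ (sub_ne_zero.mpr hx))
  rw [hsplit]
  nlinarith [exp_pos (θ * s)]

/-- The linear coefficient `a θ e^{θ s}` makes `s` the stationary point of the active branch. -/
noncomputable def expHingeCost (a θ t s R : ℝ) : ℝ :=
  a * max (exp (θ * R) - exp (θ * t)) 0 - a * θ * exp (θ * s) * R

section expHingeCost

variable {a θ t s R : ℝ}

lemma expHingeCost_of_le (hθ : 0 < θ) (hR : R ≤ t) :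
    expHingeCost a θ t s R = -(a * θ * exp (θ * s) * R) := by
  have hidle : exp (θ * R) - exp (θ * t) ≤ 0 :=
    sub_nonpos.mpr (exp_le_exp.mpr (mul_le_mul_of_nonneg_left hR hθ.le))
  rw [expHingeCost, max_eq_right hidle]
  ring

lemma expHingeCost_lt_of_le (ha : 0 < a) (hθ : 0 < θ) (hts : t ≤ s) (hR : t ≤ R)
    (hRs : R ≠ s) : expHingeCost a θ t s s < expHingeCost a θ t s R := by
  have hactive {x : ℝ} (hx : t ≤ x) : 0 ≤ exp (θ * x) - exp (θ * t) :=
    sub_nonneg.mpr (exp_le_exp.mpr (mul_le_mul_of_nonneg_left hx hθ.le))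
  rw [expHingeCost, expHingeCost, max_eq_left (hactive hts), max_eq_left (hactive hR)]
  nlinarith [exp_add_mul_sub_lt_exp hθ.ne' hRs]

lemma expHingeCost_lt (ha : 0 < a) (hθ : 0 < θ) (hts : t < s) (hRs : R ≠ s) :
    expHingeCost a θ t s s < expHingeCost a θ t s R := by
  rcases le_total R t with hRt | htR
  · have hslope : 0 < a * θ * exp (θ * s) := by positivity
    calc expHingeCost a θ t s s
        < expHingeCost a θ t s t := expHingeCost_lt_of_le ha hθ hts.le le_rfl hts.ne
      _ = -(a * θ * exp (θ * s) * t) := expHingeCost_of_le hθ le_rfl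
      _ ≤ -(a * θ * exp (θ * s) * R) := by nlinarith
      _ = expHingeCost a θ t s R := (expHingeCost_of_le hθ hRt).symm
  · exact expHingeCost_lt_of_le ha hθ hts.le htR hRs

end expHingeCost

theorem BGL_interior_case_general (θ η V ξ Q Eb : ℝ)
    (hθ : 0 < θ) (hη : 0 < η) (hV : 0 < V) (hξ : 0 < ξ) (hQ : 0 < Q) (hEb : 0 ≤ Eb)
    (F : ℝ → ℝ)
    (hF : F = fun R : ℝ => V * ξ * max (η * (Real.exp (θ * R) - 1) - Eb) 0 - Q * R)
    (Rth : ℝ) (hRth : Rth = (1 / θ) * Real.log (Eb / η + 1))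
    (Rs : ℝ) (hRs : Rs = (1 / θ) * Real.log (Q / (θ * V * η * ξ)))
    (hlt : Rth < Rs) :
    (∀ R ∈ Set.Icc Rth Q, F Rs ≤ F R) ∧
    F Rs < -(Q * Rth) ∧
    (∀ R ∈ Set.Icc (0 : ℝ) Q, R ≠ Rs → F Rs < F R) := by
  have hexpRth : exp (θ * Rth) = Eb / η + 1 :=
    hRth ▸ exp_mul_one_div_mul_log hθ.ne' (by positivity)
  have hexpRs : exp (θ * Rs) = Q / (θ * V * η * ξ) :=
    hRs ▸ exp_mul_one_div_mul_log hθ.ne' (by positivity)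
  have hslope : V * ξ * η * θ * exp (θ * Rs) = Q := by
    rw [hexpRs]; field_simp
  have hFeq (R : ℝ) : F R = expHingeCost (V * ξ * η) θ Rth Rs R := by
    have hhinge :
        max (η * (exp (θ * R) - 1) - Eb) 0 = η * max (exp (θ * R) - exp (θ * Rth)) 0 := by
      rw [mul_max_of_nonneg _ _ hη.le, mul_zero, hexpRth]
      congr 1
      field_simp
      ring
    rw [hF, expHingeCost, hslope]
    dsimp only
    rw [hhinge, mul_assoc (V * ξ)]
  have hstrict (R : ℝ) (hR : R ≠ Rs) : F Rs < F R := by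
    rw [hFeq, hFeq]
    exact expHingeCost_lt (by positivity) hθ hlt hR
  refine ⟨fun R _ => ?_, ?_, fun R _ hR => hstrict R hR⟩
  · rcases eq_or_ne R Rs with rfl | hR
    · exact le_rfl
    · exact (hstrict R hR).le
  · have hFRth : F Rth = -(Q * Rth) := by
      rw [hFeq, expHingeCost_of_le hθ le_rfl, hslope]
    exact hFRth ▸ hstrict Rth hlt.ne

/-- Interior-stationary-point case of the BGL rate rule: if `R_th < R_s ≤ Q`,
then `R_s` minimizes `F` over `[R_th, Q]`, `F(R_s) < -Q·R_th`, and `R_s` is the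
unique minimizer of `F` over `[0, Q]`. -/
theorem BGL_interior_case (θ η V ξ Q Eb : ℝ)
    (hθ : 0 < θ) (hη : 0 < η) (hV : 0 < V) (hξ : 0 < ξ) (hQ : 0 < Q) (hEb : 0 ≤ Eb)
    (F : ℝ → ℝ)
    (hF : F = fun R : ℝ => V * ξ * max (η * (Real.exp (θ * R) - 1) - Eb) 0 - Q * R)
    (Rth : ℝ) (hRth : Rth = (1 / θ) * Real.log (Eb / η + 1))
    (Rs : ℝ) (hRs : Rs = (1 / θ) * Real.log (Q / (θ * V * η * ξ)))
    (hlt : Rth < Rs) (hle : Rs ≤ Q) :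
    (∀ R ∈ Set.Icc Rth Q, F Rs ≤ F R) ∧
    F Rs < -(Q * Rth) ∧
    (∀ R ∈ Set.Icc (0 : ℝ) Q, R ≠ Rs → F Rs < F R) :=
  BGL_interior_case_general θ η V ξ Q Eb hθ hη hV hξ hQ hEb F hF Rth hRth Rs hRs hlt
end

section
/- Fix reals θ > 0, η > 0, V > 0, ξ > 0, Q > 0 and E_b ≥ 0, define F(R) = V·ξ·max(η(e^{θR} − 1) − E_b, 0) − Q·R, R_th = (1/θ)·ln(E_b/η + 1) and R_s = (1/θ)·ln(Q/(θ·V·η·ξ)). If R_th < Q < R_s, then for every R ∈ [0, Q] one has F(R) ≥ F(Q) = V·ξ·(η(e^{θQ} − 1) − E_b) − Q², and moreover F(Q) < −Q·R_th; that is, R = Q is the minimizer of F over [0, Q]. -/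
/-!
On `[0, Q]` the clipped objective `F` dominates its unclipped branch
`G R = Vξ(η(e^{θR} - 1) - E_b) - Q R`, which is convex with slope `θVξη e^{θR} - Q`.
The hypothesis `Q < R_s` says exactly that this slope is still negative at `R = Q`,
so `G` is strictly decreasing on `(-∞, Q]`. Since `R_th < Q`, the clip is inactive at `Q`,
so `F Q = G Q ≤ G R ≤ F R`; and `G R_th = -Q R_th` because the clip vanishes exactly at `R_th`.
-/

open Real Set

lemma exp_mul_mul_one_add_le_exp_mul (θ x y : ℝ) :
    exp (θ * y) * (1 + θ * (x - y)) ≤ exp (θ * x) := by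
  calc exp (θ * y) * (1 + θ * (x - y))
      ≤ exp (θ * y) * exp (θ * (x - y)) := by
        gcongr
        linarith [add_one_le_exp (θ * (x - y))]
    _ = exp (θ * x) := by rw [← exp_add]; ring_nf

lemma strictAntiOn_mul_exp_sub_mul {k θ Q S : ℝ} (hk : 0 ≤ k) (hθ : 0 ≤ θ)
    (hS : θ * k * exp (θ * S) < Q) :
    StrictAntiOn (fun R => k * exp (θ * R) - Q * R) (Iic S) := by
  intro R _ R' hR' hRR'
  have hslope : θ * k * exp (θ * R') < Q :=
    lt_of_le_of_lt (by gcongr; exact hR') hS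
  have htangent := mul_le_mul_of_nonneg_left (exp_mul_mul_one_add_le_exp_mul θ R R') hk
  linarith [mul_lt_mul_of_pos_right hslope (sub_pos.2 hRR')]

/-- Delay-dominated case of the BGL rate rule: if `R_th < Q < R_s`, then `R = Q`
minimizes `F` over `[0, Q]`, with `F(Q) = Vξ(η(e^{θQ} - 1) - E_b) - Q²`, and
`F(Q) < -Q·R_th`. -/
theorem BGL_delay_dominated_case (θ η V ξ Q Eb : ℝ)
    (hθ : 0 < θ) (hη : 0 < η) (hV : 0 < V) (hξ : 0 < ξ) (hQ : 0 < Q) (hEb : 0 ≤ Eb)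
    (F : ℝ → ℝ)
    (hF : F = fun R : ℝ => V * ξ * max (η * (Real.exp (θ * R) - 1) - Eb) 0 - Q * R)
    (Rth : ℝ) (hRth : Rth = (1 / θ) * Real.log (Eb / η + 1))
    (Rs : ℝ) (hRs : Rs = (1 / θ) * Real.log (Q / (θ * V * η * ξ)))
    (h1 : Rth < Q) (h2 : Q < Rs) :
    (∀ R ∈ Set.Icc (0 : ℝ) Q, F Q ≤ F R) ∧
    F Q = V * ξ * (η * (Real.exp (θ * Q) - 1) - Eb) - Q ^ 2 ∧
    F Q < -(Q * Rth) := by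
  have hslope : θ * (V * ξ * η) * exp (θ * Q) < Q := by
    rw [hRs, one_div_mul_eq_div, lt_div_iff₀ hθ, lt_log_iff_exp_lt (by positivity),
      lt_div_iff₀ (by positivity), mul_comm Q θ] at h2
    linarith
  have hexp_Rth : exp (θ * Rth) = Eb / η + 1 := by
    rw [hRth, ← mul_assoc, mul_one_div_cancel hθ.ne', one_mul, exp_log (by positivity)]
  have hclip_Q : Eb ≤ η * (exp (θ * Q) - 1) := by
    have := exp_lt_exp.2 (mul_lt_mul_of_pos_left h1 hθ)
    rw [hexp_Rth, ← lt_sub_iff_add_lt, div_lt_iff₀' hη] at this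
    exact this.le
  set G : ℝ → ℝ := fun R => V * ξ * (η * (exp (θ * R) - 1) - Eb) - Q * R
  have hG_anti : StrictAntiOn G (Iic Q) := fun R hR R' hR' hRR' => by
    have := strictAntiOn_mul_exp_sub_mul (by positivity) hθ.le hslope hR hR' hRR'
    simp only [G] at this ⊢
    linarith
  have hG_le_F : ∀ R, G R ≤ F R := fun R => by
    simp only [hF, G]
    gcongr
    exact le_max_left _ _
  have hF_Q : F Q = G Q := by
    simp only [hF, G, max_eq_left (sub_nonneg.2 hclip_Q)]
  have hG_Rth : G Rth = -(Q * Rth) := by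
    simp only [G, hexp_Rth]
    field_simp
    ring
  refine ⟨fun R hR => ?_, by rw [hF_Q]; ring, ?_⟩
  · rw [hF_Q]
    exact (hG_anti.antitoneOn hR.2 self_mem_Iic hR.2).trans (hG_le_F R)
  · rw [hF_Q, ← hG_Rth]
    exact hG_anti h1.le self_mem_Iic h1
end
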